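/- Let I ⊂ ℚ[z₁,z₂,z₃] be the homogeneous ideal generated by (z₁−z₂)², (z₂−z₃)², (z₃−z₁)². Then the quotient ring ℚ[z₁,z₂,z₃]/I has Hilbert function equal to 1 in degree 0 and equal to 3 in every degree m ≥ 1. -/

import Mathlib

open MvPolynomial Module

/-- The ideal generated by the three squares of differences of the variables. -/
noncomputable def sphericalIdeal : Ideal (MvPolynomial (Fin 3) ℚ) :=
  Ideal.span {(X 0 - X 1) ^ 2, (X 1 - X 2) ^ 2, (X 2 - X 0) ^ 2}

namespace SphericalAux

abbrev P3 : Type := MvPolynomial (Fin 3) ℚ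

noncomputable def ss : P3 := X 0 + X 1 + X 2
noncomputable def uu : P3 := X 0 - X 1
noncomputable def vv : P3 := X 1 - X 2
def pt : Fin 3 → ℚ := fun _ => 1

/-- `sphericalIdeal` as a `ℚ`-submodule. -/
noncomputable def J : Submodule ℚ P3 := Submodule.restrictScalars ℚ sphericalIdeal

lemma mem_J {f : P3} : f ∈ J ↔ f ∈ sphericalIdeal := Iff.rfl

lemma fin3 (i : Fin 3) : i = 0 ∨ i = 1 ∨ i = 2 := by fin_cases i <;> simp

lemma degree_add (a b : Fin 3 →₀ ℕ) : (a + b).degree = a.degree + b.degree := by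
  simp only [Finsupp.degree_eq_weight_one]; exact map_add _ a b

lemma degree_single (i : Fin 3) : (Finsupp.single i (1 : ℕ)).degree = 1 := by
  exact Finsupp.degree_single i 1

lemma g1_mem : (X 0 - X 1 : P3) ^ 2 ∈ sphericalIdeal := Ideal.subset_span (by simp)
lemma g2_mem : (X 1 - X 2 : P3) ^ 2 ∈ sphericalIdeal := Ideal.subset_span (by simp)
lemma g3_mem : (X 2 - X 0 : P3) ^ 2 ∈ sphericalIdeal := Ideal.subset_span (by simp)

lemma J_mul_mem (p : P3) {q : P3} (hq : q ∈ J) : p * q ∈ J :=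
  Ideal.mul_mem_left _ p hq

lemma half_smul {x y : P3} (h : y = x + x) : x = (1/2 : ℚ) • y := by
  subst h
  rw [smul_add, ← add_smul]; norm_num

lemma third_mem {S : Submodule ℚ P3} {x y : P3} (hxy : x + x + x = y) (h : y ∈ S) : x ∈ S := by
  have hx : x = (1/3 : ℚ) • y := by
    rw [← hxy, smul_add, smul_add, ← add_smul, ← add_smul]; norm_num
  rw [hx]; exact S.smul_mem _ h

lemma huu : uu * uu ∈ J := by
  have : uu * uu = (X 0 - X 1 : P3) ^ 2 := by unfold uu; ring
  rw [this]; exact g1_mem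

lemma hvv : vv * vv ∈ J := by
  have : vv * vv = (X 1 - X 2 : P3) ^ 2 := by unfold vv; ring
  rw [this]; exact g2_mem

lemma huv : uu * vv ∈ J := by
  have h : (X 2 - X 0 : P3) ^ 2 - (X 0 - X 1) ^ 2 - (X 1 - X 2) ^ 2 = uu * vv + uu * vv := by
    unfold uu vv; ring
  rw [half_smul h]
  exact J.smul_mem _ (sub_mem (sub_mem g3_mem g1_mem) g2_mem)

/-- The candidate space of degree `k+1` polynomials modulo the ideal. -/
noncomputable def T (k : ℕ) : Submodule ℚ P3 :=
  Submodule.span ℚ {ss ^ (k + 1), ss ^ k * uu, ss ^ k * vv} ⊔ J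

lemma mem_T_1 (k : ℕ) : ss ^ (k + 1) ∈ T k :=
  Submodule.mem_sup_left (Submodule.subset_span (by simp))

lemma mem_T_2 (k : ℕ) : ss ^ k * uu ∈ T k :=
  Submodule.mem_sup_left (Submodule.subset_span (by simp))

lemma mem_T_3 (k : ℕ) : ss ^ k * vv ∈ T k :=
  Submodule.mem_sup_left (Submodule.subset_span (by simp))

lemma J_le_T (k : ℕ) : J ≤ T k := le_sup_right

lemma X_mul_pow_mem (k : ℕ) (i : Fin 3) : X i * ss ^ (k + 1) ∈ T (k + 1) := by
  rcases fin3 i with rfl | rfl | rfl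
  · exact third_mem (y := ss ^ (k + 2) + (ss ^ (k + 1) * uu + ss ^ (k + 1) * uu) + ss ^ (k + 1) * vv)
      (by unfold ss uu vv; ring)
      (add_mem (add_mem (mem_T_1 _) (add_mem (mem_T_2 _) (mem_T_2 _))) (mem_T_3 _))
  · exact third_mem (y := ss ^ (k + 2) - ss ^ (k + 1) * uu + ss ^ (k + 1) * vv)
      (by unfold ss uu vv; ring)
      (add_mem (sub_mem (mem_T_1 _) (mem_T_2 _)) (mem_T_3 _))
  · exact third_mem (y := ss ^ (k + 2) - ss ^ (k + 1) * uu - (ss ^ (k + 1) * vv + ss ^ (k + 1) * vv))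
      (by unfold ss uu vv; ring)
      (sub_mem (sub_mem (mem_T_1 _) (mem_T_2 _)) (add_mem (mem_T_3 _) (mem_T_3 _)))

lemma X_mul_u_mem (k : ℕ) (i : Fin 3) : X i * (ss ^ k * uu) ∈ T (k + 1) := by
  have h2 : ss ^ k * (uu * uu) ∈ T (k + 1) := J_le_T _ (J_mul_mem _ huu)
  have h3 : ss ^ k * (uu * vv) ∈ T (k + 1) := J_le_T _ (J_mul_mem _ huv)
  rcases fin3 i with rfl | rfl | rfl
  · exact third_mem
      (y := ss ^ (k + 1) * uu + (ss ^ k * (uu * uu) + ss ^ k * (uu * uu)) + ss ^ k * (uu * vv))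
      (by unfold ss uu vv; ring)
      (add_mem (add_mem (mem_T_2 _) (add_mem h2 h2)) h3)
  · exact third_mem (y := ss ^ (k + 1) * uu - ss ^ k * (uu * uu) + ss ^ k * (uu * vv))
      (by unfold ss uu vv; ring)
      (add_mem (sub_mem (mem_T_2 _) h2) h3)
  · exact third_mem
      (y := ss ^ (k + 1) * uu - ss ^ k * (uu * uu) - (ss ^ k * (uu * vv) + ss ^ k * (uu * vv)))
      (by unfold ss uu vv; ring)
      (sub_mem (sub_mem (mem_T_2 _) h2) (add_mem h3 h3))

lemma X_mul_v_mem (k : ℕ) (i : Fin 3) : X i * (ss ^ k * vv) ∈ T (k + 1) := by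
  have h2 : ss ^ k * (vv * vv) ∈ T (k + 1) := J_le_T _ (J_mul_mem _ hvv)
  have h3 : ss ^ k * (uu * vv) ∈ T (k + 1) := J_le_T _ (J_mul_mem _ huv)
  rcases fin3 i with rfl | rfl | rfl
  · exact third_mem
      (y := ss ^ (k + 1) * vv + (ss ^ k * (uu * vv) + ss ^ k * (uu * vv)) + ss ^ k * (vv * vv))
      (by unfold ss uu vv; ring)
      (add_mem (add_mem (mem_T_3 _) (add_mem h3 h3)) h2)
  · exact third_mem (y := ss ^ (k + 1) * vv - ss ^ k * (uu * vv) + ss ^ k * (vv * vv))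
      (by unfold ss uu vv; ring)
      (add_mem (sub_mem (mem_T_3 _) h3) h2)
  · exact third_mem
      (y := ss ^ (k + 1) * vv - ss ^ k * (uu * vv) - (ss ^ k * (vv * vv) + ss ^ k * (vv * vv)))
      (by unfold ss uu vv; ring)
      (sub_mem (sub_mem (mem_T_3 _) h3) (add_mem h2 h2))

lemma X_mem_T0 (i : Fin 3) : (X i : P3) ∈ T 0 := by
  rcases fin3 i with rfl | rfl | rfl
  · exact third_mem (y := ss ^ (0 + 1) + (ss ^ 0 * uu + ss ^ 0 * uu) + ss ^ 0 * vv)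
      (by unfold ss uu vv; ring)
      (add_mem (add_mem (mem_T_1 _) (add_mem (mem_T_2 _) (mem_T_2 _))) (mem_T_3 _))
  · exact third_mem (y := ss ^ (0 + 1) - ss ^ 0 * uu + ss ^ 0 * vv)
      (by unfold ss uu vv; ring)
      (add_mem (sub_mem (mem_T_1 _) (mem_T_2 _)) (mem_T_3 _))
  · exact third_mem (y := ss ^ (0 + 1) - ss ^ 0 * uu - (ss ^ 0 * vv + ss ^ 0 * vv))
      (by unfold ss uu vv; ring)
      (sub_mem (sub_mem (mem_T_1 _) (mem_T_2 _)) (add_mem (mem_T_3 _) (mem_T_3 _)))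

lemma X_mul_T_mem (k : ℕ) (i : Fin 3) {f : P3} (hf : f ∈ T k) : X i * f ∈ T (k + 1) := by
  obtain ⟨p, hp, q, hq, rfl⟩ := Submodule.mem_sup.mp hf
  rw [mul_add]
  refine add_mem ?_ (J_le_T _ (J_mul_mem _ hq))
  obtain ⟨a, z, hz, rfl⟩ := Submodule.mem_span_insert.mp hp
  obtain ⟨b, c, rfl⟩ := Submodule.mem_span_pair.mp hz
  have : X i * (a • ss ^ (k + 1) + (b • (ss ^ k * uu) + c • (ss ^ k * vv))) =
      a • (X i * ss ^ (k + 1)) + (b • (X i * (ss ^ k * uu)) + c • (X i * (ss ^ k * vv))) := by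
    rw [mul_add, mul_add, mul_smul_comm, mul_smul_comm, mul_smul_comm]
  rw [this]
  exact add_mem (Submodule.smul_mem _ _ (X_mul_pow_mem k i))
    (add_mem (Submodule.smul_mem _ _ (X_mul_u_mem k i))
      (Submodule.smul_mem _ _ (X_mul_v_mem k i)))

lemma exists_split (d : Fin 3 →₀ ℕ) (hd : d.degree ≠ 0) :
    ∃ i e, d = Finsupp.single i 1 + e ∧ e.degree + 1 = d.degree := by
  have hd0 : d ≠ 0 := fun h => hd (by simp [h])
  obtain ⟨i, hi⟩ := Finsupp.ne_iff.mp hd0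
  simp only [Finsupp.coe_zero, Pi.zero_apply] at hi
  refine ⟨i, d - Finsupp.single i 1, ?_, ?_⟩
  · ext j
    by_cases h : j = i
    · subst h
      have hi' : d j ≠ 0 := hi
      simp only [Finsupp.add_apply, Finsupp.single_eq_same, Finsupp.tsub_apply]
      omega
    · simp only [Finsupp.add_apply, Finsupp.single_eq_of_ne' (Ne.symm h), Finsupp.tsub_apply]
      omega
  · have : (Finsupp.single i 1 + (d - Finsupp.single i 1)).degree = d.degree := by
      congr 1
      ext j
      by_cases h : j = i
      · subst h
        simp only [Finsupp.add_apply, Finsupp.single_eq_same, Finsupp.tsub_apply]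
        omega
      · simp only [Finsupp.add_apply, Finsupp.single_eq_of_ne' (Ne.symm h), Finsupp.tsub_apply]
        omega
    rw [degree_add, degree_single] at this
    omega

lemma monomial_mem : ∀ (k : ℕ) (d : Fin 3 →₀ ℕ), d.degree = k + 1 → ∀ c : ℚ,
    (monomial d c : P3) ∈ T k := by
  intro k
  induction k with
  | zero =>
    intro d hd c
    obtain ⟨i, e, rfl, he⟩ := exists_split d (by omega)
    have he0 : e = 0 := by
      rw [← Finsupp.degree_eq_zero_iff]; omega
    subst he0
    rw [add_zero]
    have : (monomial (Finsupp.single i 1) c : P3) = c • X i := by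
      rw [smul_eq_C_mul, X, C_mul_monomial, mul_one]
    rw [this]
    exact Submodule.smul_mem _ _ (X_mem_T0 i)
  | succ k ih =>
    intro d hd c
    obtain ⟨i, e, rfl, he⟩ := exists_split d (by omega)
    have : (monomial (Finsupp.single i 1 + e) c : P3) = X i * monomial e c := by
      rw [monomial_single_add, pow_one]
    rw [this]
    exact X_mul_T_mem k i (ih e (by omega) c)

end SphericalAux
namespace SphericalAux

lemma homog_mem {k : ℕ} {f : P3} (hf : f.IsHomogeneous (k + 1)) : f ∈ T k := by
  nth_rewrite 1 [as_sum f]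
  apply Submodule.sum_mem
  intro d hd
  apply monomial_mem k d ?_
  rw [Finsupp.degree_eq_weight_one]
  exact hf (mem_support_iff.mp hd)

lemma vanish {f : P3} (hf : f ∈ sphericalIdeal) :
    eval pt f = 0 ∧ eval pt (pderiv 0 f) = 0 ∧ eval pt (pderiv 1 f) = 0 := by
  refine Submodule.span_induction ?_ ?_ ?_ ?_ hf
  · rintro g hg
    simp only [Set.mem_insert_iff, Set.mem_singleton_iff] at hg
    rcases hg with rfl | rfl | rfl <;>
      refine ⟨by simp [pt], by simp [pow_two, pderiv_mul, pderiv_X, pt], by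
        simp [pow_two, pderiv_mul, pderiv_X, pt]⟩
  · simp
  · rintro x y hx hy ⟨h1, h2, h3⟩ ⟨h4, h5, h6⟩
    refine ⟨?_, ?_, ?_⟩ <;> simp [h1, h2, h3, h4, h5, h6]
  · rintro a x hx ⟨h1, h2, h3⟩
    rw [smul_eq_mul]
    refine ⟨by simp [h1], ?_, ?_⟩ <;>
      simp [pderiv_mul, h1, h2, h3]

lemma ev_s : eval pt ss = 3 := by simp [ss, pt]; norm_num
lemma ev_u : eval pt uu = 0 := by simp [uu, pt]
lemma ev_v : eval pt vv = 0 := by simp [vv, pt]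
lemma pd0_u : pderiv 0 uu = 1 := by simp [uu, pderiv_X]
lemma pd1_u : pderiv 1 uu = -1 := by simp [uu, pderiv_X]
lemma pd0_v : pderiv 0 vv = 0 := by simp [vv, pderiv_X]
lemma pd1_v : pderiv 1 vv = 1 := by simp [vv, pderiv_X]

lemma E1 (k : ℕ) : eval pt (ss ^ (k + 1)) = 3 ^ (k + 1) := by rw [map_pow, ev_s]
lemma E2 (k : ℕ) : eval pt (ss ^ k * uu) = 0 := by rw [map_mul, ev_u, mul_zero]
lemma E3 (k : ℕ) : eval pt (ss ^ k * vv) = 0 := by rw [map_mul, ev_v, mul_zero]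

lemma ED0_2 (k : ℕ) : eval pt (pderiv 0 (ss ^ k * uu)) = 3 ^ k := by
  rw [pderiv_mul, map_add, map_mul, map_mul, ev_u, pd0_u, map_one, mul_zero, zero_add,
    map_pow, ev_s, mul_one]
lemma ED1_2 (k : ℕ) : eval pt (pderiv 1 (ss ^ k * uu)) = -3 ^ k := by
  rw [pderiv_mul, map_add, map_mul, map_mul, ev_u, pd1_u, mul_zero, zero_add,
    map_pow, ev_s, map_neg, map_one, mul_neg, mul_one]
lemma ED0_3 (k : ℕ) : eval pt (pderiv 0 (ss ^ k * vv)) = 0 := by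
  rw [pderiv_mul, map_add, map_mul, map_mul, ev_v, pd0_v, mul_zero, zero_add, map_zero, mul_zero]
lemma ED1_3 (k : ℕ) : eval pt (pderiv 1 (ss ^ k * vv)) = 3 ^ k := by
  rw [pderiv_mul, map_add, map_mul, map_mul, ev_v, pd1_v, mul_zero, zero_add,
    map_pow, ev_s, map_one, mul_one]

end SphericalAux
namespace SphericalAux

noncomputable def Ev : P3 →ₗ[ℚ] ℚ := (aeval pt).toLinearMap

lemma Ev_apply (f : P3) : Ev f = eval pt f := rfl

noncomputable def Phi : P3 →ₗ[ℚ] (Fin 3 → ℚ) :=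
  LinearMap.pi ![Ev, Ev ∘ₗ (pderiv 0).toLinearMap, Ev ∘ₗ (pderiv 1).toLinearMap]

lemma Phi0 (f : P3) : Phi f 0 = eval pt f := rfl
lemma Phi1 (f : P3) : Phi f 1 = eval pt (pderiv 0 f) := rfl
lemma Phi2 (f : P3) : Phi f 2 = eval pt (pderiv 1 f) := rfl

lemma evq (a : ℚ) (x : P3) : eval pt (a • x) = a * eval pt x := by
  rw [smul_eq_C_mul, map_mul, eval_C]

noncomputable abbrev H (m : ℕ) := homogeneousSubmodule (Fin 3) ℚ m

noncomputable def N (m : ℕ) : Submodule ℚ (H m) :=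
  Submodule.comap (H m).subtype (Submodule.restrictScalars ℚ sphericalIdeal)

noncomputable def Psi (m : ℕ) : H m →ₗ[ℚ] (Fin 3 → ℚ) := Phi ∘ₗ (H m).subtype

lemma hss : ss.IsHomogeneous 1 :=
  ((isHomogeneous_X ℚ 0).add (isHomogeneous_X ℚ 1)).add (isHomogeneous_X ℚ 2)

lemma huu_h : uu.IsHomogeneous 1 := (isHomogeneous_X ℚ 0).sub (isHomogeneous_X ℚ 1)
lemma hvv_h : vv.IsHomogeneous 1 := (isHomogeneous_X ℚ 1).sub (isHomogeneous_X ℚ 2)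

lemma hg1 (k : ℕ) : (ss ^ (k + 1)).IsHomogeneous (k + 1) := by
  simpa using hss.pow (k + 1)

lemma hg2 (k : ℕ) : (ss ^ k * uu).IsHomogeneous (k + 1) := by
  simpa using (hss.pow k).mul huu_h

lemma hg3 (k : ℕ) : (ss ^ k * vv).IsHomogeneous (k + 1) := by
  simpa using (hss.pow k).mul hvv_h

lemma pow3_ne (n : ℕ) : (3 : ℚ) ^ n ≠ 0 := pow_ne_zero _ (by norm_num)

lemma ker_Psi (k : ℕ) : LinearMap.ker (Psi (k + 1)) = N (k + 1) := by
  ext f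
  simp only [LinearMap.mem_ker, N, Submodule.mem_comap, Submodule.coe_subtype,
    Submodule.restrictScalars_mem]
  constructor
  · intro hPsi
    have hmem : (f : P3) ∈ T k := homog_mem f.2
    obtain ⟨p, hp, q, hq, heq⟩ := Submodule.mem_sup.mp hmem
    obtain ⟨a, z, hz, rfl⟩ := Submodule.mem_span_insert.mp hp
    obtain ⟨b, c, rfl⟩ := Submodule.mem_span_pair.mp hz
    obtain ⟨hq0, hq1, hq2⟩ := vanish hq
    have c0 : eval pt (f : P3) = 0 := by
      have := congrFun hPsi 0
      rwa [Psi, LinearMap.comp_apply, Phi0] at this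
    have c1 : eval pt (pderiv 0 (f : P3)) = 0 := by
      have := congrFun hPsi 1
      rwa [Psi, LinearMap.comp_apply, Phi1] at this
    have c2 : eval pt (pderiv 1 (f : P3)) = 0 := by
      have := congrFun hPsi 2
      rwa [Psi, LinearMap.comp_apply, Phi2] at this
    have e0 : eval pt ((f : P3)) = a * 3 ^ (k + 1) := by
      rw [← heq]
      simp only [map_add, evq, E1, E2, E3, hq0]
      ring
    have ha : a = 0 := by
      have h : a * 3 ^ (k + 1) = 0 := e0.symm.trans c0
      exact (mul_eq_zero.mp h).resolve_right (pow3_ne _)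
    have e1 : eval pt (pderiv 0 ((f : P3))) =
        a * eval pt (pderiv 0 (ss ^ (k + 1))) + b * 3 ^ k := by
      rw [← heq]
      simp only [map_add, Derivation.map_smul, evq, ED0_2, ED0_3, hq1, smul_eq_mul]
      ring
    have hb : b = 0 := by
      have h : b * 3 ^ k = 0 := by
        have := e1.symm.trans c1
        rw [ha] at this
        linarith [this]
      exact (mul_eq_zero.mp h).resolve_right (pow3_ne _)
    have e2 : eval pt (pderiv 1 ((f : P3))) =
        a * eval pt (pderiv 1 (ss ^ (k + 1))) + (b * (-3 ^ k) + c * 3 ^ k) := by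
      rw [← heq]
      simp only [map_add, Derivation.map_smul, evq, ED1_2, ED1_3, hq2, smul_eq_mul]
      ring
    have hc : c = 0 := by
      have h : c * 3 ^ k = 0 := by
        have := e2.symm.trans c2
        rw [ha, hb] at this
        linarith [this]
      exact (mul_eq_zero.mp h).resolve_right (pow3_ne _)
    subst ha; subst hb; subst hc
    have : (f : P3) = q := by rw [← heq]; simp
    rw [this]; exact hq
  · intro hf
    funext j
    rcases fin3 j with rfl | rfl | rfl
    · rw [Psi, LinearMap.comp_apply, Phi0]; exact (vanish hf).1
    · rw [Psi, LinearMap.comp_apply, Phi1]; exact (vanish hf).2.1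
    · rw [Psi, LinearMap.comp_apply, Phi2]; exact (vanish hf).2.2

lemma surj_Psi (k : ℕ) : Function.Surjective (Psi (k + 1)) := by
  intro w
  set D0 : ℚ := eval pt (pderiv 0 (ss ^ (k + 1))) with hD0
  set D1 : ℚ := eval pt (pderiv 1 (ss ^ (k + 1))) with hD1
  set a : ℚ := w 0 / 3 ^ (k + 1) with hadef
  set b : ℚ := (w 1 - a * D0) / 3 ^ k with hbdef
  set c : ℚ := (w 2 - a * D1 + b * 3 ^ k) / 3 ^ k with hcdef
  refine ⟨a • ⟨ss ^ (k + 1), hg1 k⟩ + b • ⟨ss ^ k * uu, hg2 k⟩ + c • ⟨ss ^ k * vv, hg3 k⟩, ?_⟩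
  funext j
  show Phi (a • ss ^ (k + 1) + b • (ss ^ k * uu) + c • (ss ^ k * vv)) j = w j
  rcases fin3 j with rfl | rfl | rfl
  · rw [Phi0]
    simp only [map_add, evq, E1, E2, E3, mul_zero, add_zero]
    rw [hadef]
    field_simp
  · rw [Phi1]
    simp only [map_add, Derivation.map_smul, evq, ED0_2, ED0_3, mul_zero, add_zero]
    rw [← hD0, hbdef]
    field_simp
    ring
  · rw [Phi2]
    simp only [map_add, Derivation.map_smul, evq, ED1_2, ED1_3]
    rw [← hD1, hcdef, hbdef]
    field_simp
    ring

end SphericalAux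
namespace SphericalAux

noncomputable def Psi0 : H 0 →ₗ[ℚ] ℚ := Ev ∘ₗ (H 0).subtype

lemma ker_Psi0 : LinearMap.ker Psi0 = N 0 := by
  ext f
  simp only [LinearMap.mem_ker, N, Submodule.mem_comap, Submodule.coe_subtype,
    Submodule.restrictScalars_mem]
  constructor
  · intro h
    have hC : (f : P3) = C (coeff 0 (f : P3)) := by
      ext d
      by_cases hd : d = 0
      · subst hd; simp
      · rw [f.2.coeff_eq_zero (by
          rw [Ne, Finsupp.degree_eq_zero_iff]; exact hd), coeff_C, if_neg (Ne.symm hd)]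
    have h0 : coeff 0 (f : P3) = 0 := by
      have : Psi0 f = eval pt ((f : P3)) := rfl
      rw [this, hC] at h
      simpa using h
    rw [hC, h0, map_zero]
    exact zero_mem _
  · intro h
    have : Psi0 f = eval pt ((f : P3)) := rfl
    rw [this, (vanish h).1]

lemma surj_Psi0 : Function.Surjective Psi0 := by
  intro q
  refine ⟨q • ⟨1, isHomogeneous_one _ _⟩, ?_⟩
  show Ev ((q • (⟨1, isHomogeneous_one _ _⟩ : H 0) : H 0) : P3) = q
  have : ((q • (⟨1, isHomogeneous_one _ _⟩ : H 0) : H 0) : P3) = q • (1 : P3) := rfl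
  rw [this, Ev_apply, evq, map_one, mul_one]

end SphericalAux

open SphericalAux in
/-- The degree-`m` graded piece of the quotient `ℚ[z₁,z₂,z₃]/I`, realised as the space of
homogeneous degree-`m` polynomials modulo those lying in `I`. -/
theorem hilbert_function_of_spherical_quotient (m : ℕ) :
    finrank ℚ
      (↥(homogeneousSubmodule (Fin 3) ℚ m) ⧸
        Submodule.comap (homogeneousSubmodule (Fin 3) ℚ m).subtype
          (Submodule.restrictScalars ℚ sphericalIdeal)) =
      if m = 0 then 1 else 3 := by
  cases m with
  | zero =>
    rw [if_pos rfl]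
    have e1 := Submodule.quotEquivOfEq _ _ ker_Psi0.symm
    have e2 := Psi0.quotKerEquivOfSurjective surj_Psi0
    rw [show (Submodule.comap (homogeneousSubmodule (Fin 3) ℚ 0).subtype
          (Submodule.restrictScalars ℚ sphericalIdeal)) = N 0 from rfl]
    rw [(e1.trans e2).finrank_eq, finrank_self]
  | succ k =>
    rw [if_neg (Nat.succ_ne_zero k)]
    have e1 := Submodule.quotEquivOfEq _ _ (ker_Psi (k := k)).symm
    have e2 := (Psi (k + 1)).quotKerEquivOfSurjective (surj_Psi k)
    rw [show (Submodule.comap (homogeneousSubmodule (Fin 3) ℚ (k + 1)).subtype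
          (Submodule.restrictScalars ℚ sphericalIdeal)) = N (k + 1) from rfl]
    rw [(e1.trans e2).finrank_eq]
    simp [Module.finrank_fin_fun]
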